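/- Let q be an even prime power. Then for every integer 0 ≤ j < q-1 and every b ∈ C_{2j+1}^{(q-1,q^2)}, the complete weight of the codeword c_{q-1}(b) satisfies w_cplt(c_{q-1}(b)) = σ^j(W). -/

import Mathlib

open Polynomial

/-- The cyclotomic class `C_i^{(N,q²)} = γ^i⟨γ^N⟩`, viewed as a subset of `E`. -/
def cycClass {E : Type} [Field E] (γ : Eˣ) (i N : ℕ) : Set E :=
  {x : E | ∃ z : Eˣ, z ∈ Subgroup.zpowers (γ ^ N) ∧ x = ((γ : E) ^ i) * (z : E)}

/-- The codeword `c_N(a) = (Tr(a γ^(N k)))_{k=0}^{n-1}`, a vector of length `n` over `F`. -/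
noncomputable def cwordN {F E : Type} [Field F] [Field E] [Algebra F E]
    (γ : Eˣ) (N n : ℕ) (a : E) : Fin n → F :=
  fun k => Algebra.trace F E (a * (γ : E) ^ (N * (k : ℕ)))

/-- `𝒩(t, v)`: the number of occurrences of the symbol `t` in the vector `v`. -/
def Ncount {F : Type} [DecidableEq F] {n : ℕ} (t : F) (v : Fin n → F) : ℕ :=
  (Finset.univ.filter fun k => v k = t).card

/-- For `q` even: `R = {0 ≤ i < q-1 : α^i = α^(k+1) + α^(q-1-k) for some 0 ≤ k < q/2 - 1}`. -/
def Rset (q : ℕ) {F : Type} [Field F] (α : F) : Set ℕ :=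
  {i | i < q - 1 ∧ ∃ k : ℕ, k < q / 2 - 1 ∧ α ^ i = α ^ (k + 1) + α ^ (q - 1 - k)}

/-- For `q` even: `I = {0,1,...,q-2} \ R`. -/
def Iset (q : ℕ) {F : Type} [Field F] (α : F) : Set ℕ :=
  {i | i < q - 1} \ Rset q α

open scoped Classical in
/-- The vector `W` of length `q-1`: the `i`-th entry is `2` if `i ∈ I` and `0` otherwise. -/
noncomputable def Wvec (q : ℕ) {F : Type} [Field F] (α : F) : ℕ → ℕ :=
  fun i => if i ∈ Iset q α then 2 else 0

/-- One circular right shift of a vector of length `m` (indexed by naturals `< m`). -/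
def rshift (m : ℕ) (V : ℕ → ℕ) : ℕ → ℕ := fun i => V ((i + m - 1) % m)

/-!
The entries of `c_{q-1}(b)` are the traces `x + x ^ q` of the `q + 1` distinct elements
`x = b γ^((q-1)k)`, all of norm `x ^ (q + 1) = α ^ (2j+1)`. Two elements with the same trace and
norm are roots of the same quadratic `X² - t X + α ^ (2j+1)`, which already has the roots `x` and
`x ^ q`; so every value is taken at most twice, and `0` (where `x ^ q = x` in characteristic `2`)
at most once. If the quadratic splits over `F_q` as `(X - y₁)(X - y₂)` with `y₁ ≠ y₂`, a root of
norm `α ^ (2j+1)` would lie in `F_q` and have trace `2 y₁ ≠ y₁ + y₂`, so `y₁ + y₂` is not taken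
at all; these are the `q/2 - 1` values `α ^ j (α ^ (k+1) + α ^ (q-1-k))`, i.e. the set `R`
shifted by `j`. The other `q/2` nonzero values share at least `q` entries, hence each is taken
exactly twice.
-/

open Finset

theorem eq_or_eq_of_add_eq_add_of_mul_eq_mul {R : Type*} [CommRing R] [IsDomain R] {a b c d : R}
    (hadd : a + b = c + d) (hmul : a * b = c * d) : c = a ∨ c = b := by
  have : (c - a) * (c - b) = 0 := by linear_combination (-c) * hadd + hmul
  simpa [sub_eq_zero] using this

theorem orderOf_pow_of_orderOf_eq_mul {G : Type*} [Monoid G] {x : G} {a b : ℕ}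
    (h : orderOf x = a * b) (ha : a ≠ 0) : orderOf (x ^ a) = b := by
  rw [orderOf_pow_of_dvd ha (h ▸ dvd_mul_right a b), h, Nat.mul_div_cancel_left _ (by omega)]

theorem pow_ne_pow_orderOf_sub {M : Type*} [Monoid M] {x : M} {a l : ℕ} (ha : a ≠ 0)
    (hlt : a + l < orderOf x) : x ^ a ≠ x ^ (orderOf x - l) := fun h =>
  pow_ne_one_of_lt_orderOf (by omega) hlt <| by
    rw [pow_add, h, ← pow_add, Nat.sub_add_cancel (by omega), pow_orderOf_eq_one]

theorem eq_of_le_of_mul_card_sdiff_le_sum {ι : Type*} [DecidableEq ι] {s B : Finset ι}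
    {f : ι → ℕ} {m : ℕ} (hB : B ⊆ s) (hle : ∀ i ∈ s, f i ≤ m) (hzero : ∀ i ∈ B, f i = 0)
    (hsum : m * #(s \ B) ≤ ∑ i ∈ s, f i) : ∀ i ∈ s \ B, f i = m := by
  have hle' : ∀ i ∈ s \ B, f i ≤ m := fun i hi => hle i (mem_sdiff.mp hi).1
  rw [← sum_sdiff hB, sum_eq_zero hzero, add_zero] at hsum
  refine (sum_eq_sum_iff_of_le hle').mp (le_antisymm (sum_le_sum hle') ?_)
  rwa [sum_const, smul_eq_mul, mul_comm]

theorem rshift_iterate_apply {m : ℕ} (V : ℕ → ℕ) (j : ℕ) {i : ℕ} (hi : i < m) :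
    (rshift m)^[j] V i = V ((i + j * (m - 1)) % m) := by
  induction j generalizing i with
  | zero => simp [Nat.mod_eq_of_lt hi]
  | succ j ih =>
    rw [Function.iterate_succ_apply', rshift, ih (Nat.mod_lt _ (by omega)), Nat.mod_add_mod]
    congr 2
    rw [Nat.succ_mul]
    omega

theorem sum_ncount {F : Type} [DecidableEq F] [Fintype F] {n : ℕ} (v : Fin n → F) :
    ∑ t, Ncount t v = n := by
  have := card_eq_sum_card_fiberwise (f := v) (s := univ) (t := univ) fun _ _ =>
    mem_coe.mpr (mem_univ _)
  rwa [card_univ, Fintype.card_fin, eq_comm] at this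

section CyclotomicClass

variable {E : Type} [Field E]

theorem ne_zero_of_mem_cycClass {γ : Eˣ} {i N : ℕ} {b : E} (hb : b ∈ cycClass γ i N) : b ≠ 0 := by
  obtain ⟨z, -, rfl⟩ := hb
  exact mul_ne_zero (pow_ne_zero _ γ.ne_zero) z.ne_zero

theorem mul_pow_mul_pow_of_mem_cycClass {γ : Eˣ} {i N M : ℕ} (hγ : (γ : E) ^ (N * M) = 1)
    {b : E} (hb : b ∈ cycClass γ i N) (k : ℕ) :
    (b * (γ : E) ^ (N * k)) ^ M = ((γ : E) ^ M) ^ i := by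
  obtain ⟨z, ⟨m, rfl⟩, rfl⟩ := hb
  have hγ' : (γ ^ N) ^ M = 1 := Units.ext (by simpa [← pow_mul] using hγ)
  have hz : (((γ ^ N) ^ m : Eˣ) : E) ^ M = 1 := by
    rw [← Units.val_pow_eq_pow_val, ← zpow_natCast, ← zpow_mul, mul_comm, zpow_mul,
      zpow_natCast, hγ', one_zpow, Units.val_one]
  rw [mul_pow, mul_pow, hz, mul_one, ← pow_mul (γ : E) (N * k), mul_right_comm, pow_mul, hγ,
    one_pow, mul_one, ← pow_mul, ← pow_mul, mul_comm]

theorem injective_mul_pow_mul {g b : E} (hb : b ≠ 0) {N n : ℕ} (hn : n ≤ orderOf (g ^ N)) :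
    Function.Injective fun k : Fin n => b * g ^ (N * k) := fun k l h => by
  simp only [pow_mul, mul_right_inj' hb] at h
  exact Fin.ext (pow_injOn_Iio_orderOf (lt_of_lt_of_le k.2 hn) (lt_of_lt_of_le l.2 hn) h)

end CyclotomicClass

section SplitTraces

variable {F : Type} [Field F] {q : ℕ} {α : F}

theorem pow_succ_ne_pow_sub (hα : orderOf α = q - 1) {k l : ℕ} (hk : k < q / 2 - 1)
    (hl : l < q / 2 - 1) : α ^ (k + 1) ≠ α ^ (q - 1 - l) :=
  hα ▸ pow_ne_pow_orderOf_sub k.succ_ne_zero (by omega)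

theorem ne_zero_of_orderOf_eq (hα : orderOf α = q - 1) (hq : 2 ≤ q) : α ≠ 0 :=
  ne_zero_pow (n := q - 1) (by omega) (by rw [← hα, pow_orderOf_eq_one]; exact one_ne_zero)

variable [DecidableEq F]

/-- The values defining `R`, multiplied by `α ^ j`: the sums `y₁ + y₂` of the distinct roots of
the quadratics `(X - y₁)(X - y₂)` over `F_q` with constant term `α ^ (2j+1)`. -/
def splitTraces (q : ℕ) (α : F) (j : ℕ) : Finset F :=
  (range (q / 2 - 1)).image fun k => α ^ j * (α ^ (k + 1) + α ^ (q - 1 - k))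

theorem card_splitTraces (hα : orderOf α = q - 1) (j : ℕ) : #(splitTraces q α j) = q / 2 - 1 := by
  rw [splitTraces, card_image_of_injOn, card_range]
  intro k hk l hl h
  simp only [coe_range, Set.mem_Iio] at hk hl
  have hα0 := ne_zero_of_orderOf_eq hα (by omega)
  have hprod : ∀ m, m < q / 2 - 1 → α ^ (m + 1) * α ^ (q - 1 - m) = α ^ q := fun m hm => by
    rw [← pow_add]; congr 1; omega
  rcases eq_or_eq_of_add_eq_add_of_mul_eq_mul (mul_left_cancel₀ (pow_ne_zero j hα0) h)
    ((hprod k hk).trans (hprod l hl).symm) with h' | h'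
  · have := pow_injOn_Iio_orderOf (x := α) (by simp only [Set.mem_Iio]; omega)
      (by simp only [Set.mem_Iio]; omega) h'
    omega
  · exact absurd h' (pow_succ_ne_pow_sub hα hl hk)

theorem zero_notMem_splitTraces [CharP F 2] (hα : orderOf α = q - 1) (j : ℕ) :
    0 ∉ splitTraces q α j := by
  simp only [splitTraces, mem_image, mem_range, not_exists, not_and]
  intro k hk h
  rcases mul_eq_zero.mp h with h | h
  · exact ne_zero_of_orderOf_eq hα (by omega) (pow_eq_zero_iff'.mp h).1
  · exact pow_succ_ne_pow_sub hα hk hk (CharTwo.add_eq_zero.mp h)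

theorem exists_eq_add_of_mem_splitTraces (hα : orderOf α = q - 1) {j : ℕ} {t : F}
    (ht : t ∈ splitTraces q α j) : ∃ y₁ y₂, y₁ ≠ y₂ ∧ y₁ * y₂ = α ^ (2 * j + q) ∧ t = y₁ + y₂ := by
  obtain ⟨k, hk, rfl⟩ := mem_image.mp ht
  rw [mem_range] at hk
  refine ⟨α ^ j * α ^ (k + 1), α ^ j * α ^ (q - 1 - k), ?_, ?_, mul_add _ _ _⟩
  · exact mt (mul_left_cancel₀ (pow_ne_zero j (ne_zero_of_orderOf_eq hα (by omega))))
      (pow_succ_ne_pow_sub hα hk hk)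
  · simp only [← pow_add]; congr 1; omega

theorem mod_mem_Rset_iff (hα : orderOf α = q - 1) {i : ℕ} (hi : i < q - 1) (j : ℕ) :
    (i + j * (q - 1 - 1)) % (q - 1) ∈ Rset q α ↔ α ^ i ∈ splitTraces q α j := by
  have hα1 : α ^ (q - 1) = 1 := hα ▸ pow_orderOf_eq_one α
  have hshift : α ^ j * α ^ ((i + j * (q - 1 - 1)) % (q - 1)) = α ^ i := by
    have hexp : j + (i + j * (q - 1 - 1)) = i + (q - 1) * j := by
      zify [show 1 ≤ q by omega, show 1 ≤ q - 1 by omega]; ring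
    rw [← pow_eq_pow_mod _ hα1, ← pow_add, hexp, pow_add, pow_mul, hα1, one_pow, mul_one]
  simp only [Rset, splitTraces, Set.mem_ofPred_eq, mem_image, mem_range]
  constructor
  · rintro ⟨-, k, hk, h⟩
    exact ⟨k, hk, by rw [← h, hshift]⟩
  · rintro ⟨k, hk, h⟩
    refine ⟨Nat.mod_lt _ (by omega), k, hk, mul_left_cancel₀ (pow_ne_zero j ?_) (by rw [hshift, h])⟩
    exact ne_zero_of_orderOf_eq hα (by omega)

end SplitTraces

theorem finrank_eq_two_of_card_eq_sq {F E : Type} [Field F] [Fintype F] [Field E] [Fintype E]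
    [Algebra F E] (h : Fintype.card E = Fintype.card F ^ 2) : Module.finrank F E = 2 :=
  Nat.pow_right_injective Fintype.one_lt_card (Module.card_eq_pow_finrank.symm.trans h)

section QuadraticExtension

variable {F E : Type} [Field F] [Fintype F] [Field E] [Finite E] [Algebra F E]

theorem algebraMap_trace_eq_add_pow (hrank : Module.finrank F E = 2) (x : E) :
    algebraMap F E (Algebra.trace F E x) = x + x ^ Fintype.card F := by
  simp [FiniteField.algebraMap_trace_eq_sum_pow, hrank, Nat.card_eq_fintype_card, sum_range_succ]

theorem eq_or_eq_pow_of_trace_eq_of_pow_eq (hrank : Module.finrank F E = 2) {x y : E}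
    (htr : Algebra.trace F E x = Algebra.trace F E y)
    (hnorm : x ^ (Fintype.card F + 1) = y ^ (Fintype.card F + 1)) :
    y = x ∨ y = x ^ Fintype.card F :=
  eq_or_eq_of_add_eq_add_of_mul_eq_mul
    (by simpa only [algebraMap_trace_eq_add_pow hrank] using congrArg (algebraMap F E) htr)
    (by rwa [← pow_succ', ← pow_succ'])

variable [DecidableEq F] {n : ℕ} {e : Fin n → E}

theorem ncount_trace_le_two (hrank : Module.finrank F E = 2) (he : Function.Injective e)
    {c : E} (hc : ∀ k, e k ^ (Fintype.card F + 1) = c) (t : F) :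
    Ncount t (fun k => Algebra.trace F E (e k)) ≤ 2 := by
  classical
  by_cases ht : ∃ k₀, Algebra.trace F E (e k₀) = t
  · obtain ⟨k₀, rfl⟩ := ht
    refine (card_le_card_of_injOn e (t := {e k₀, e k₀ ^ Fintype.card F}) (fun k hk => ?_)
      he.injOn).trans card_le_two
    rcases eq_or_eq_pow_of_trace_eq_of_pow_eq hrank (mem_filter.mp hk).2.symm
      ((hc k₀).trans (hc k).symm) with h | h <;> simp [h]
  · simp only [not_exists] at ht
    simp [Ncount, ht]

theorem ncount_trace_zero_le_one [CharP F 2] (hrank : Module.finrank F E = 2)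
    (he : Function.Injective e) {c : E} (hc : ∀ k, e k ^ (Fintype.card F + 1) = c) :
    Ncount 0 (fun k => Algebra.trace F E (e k)) ≤ 1 := by
  have : CharP E 2 := charP_of_injective_algebraMap (algebraMap F E).injective 2
  refine card_le_one.mpr fun k hk l hl => he ?_
  simp only [mem_filter] at hk hl
  have hfix : e k ^ Fintype.card F = e k := by
    have := algebraMap_trace_eq_add_pow hrank (e k)
    rw [hk.2, map_zero, eq_comm, CharTwo.add_eq_zero] at this
    exact this.symm
  rcases eq_or_eq_pow_of_trace_eq_of_pow_eq hrank (hk.2.trans hl.2.symm)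
    ((hc k).trans (hc l).symm) with h | h
  · exact h.symm
  · rw [h, hfix]

theorem ncount_trace_add_eq_zero (hrank : Module.finrank F E = 2) {y₁ y₂ : F} (hne : y₁ ≠ y₂)
    (hc : ∀ k, e k ^ (Fintype.card F + 1) = algebraMap F E (y₁ * y₂)) :
    Ncount (y₁ + y₂) (fun k => Algebra.trace F E (e k)) = 0 := by
  refine card_eq_zero.mpr <| filter_eq_empty_iff.mpr fun k _ htr =>
    hne ((algebraMap F E).injective ?_)
  have hfix : ∀ y : F, algebraMap F E y ^ Fintype.card F = algebraMap F E y := fun y => by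
    rw [← map_pow, FiniteField.pow_card]
  have hsum : algebraMap F E y₁ + algebraMap F E y₂ = e k + e k ^ Fintype.card F := by
    rw [← map_add, ← htr, algebraMap_trace_eq_add_pow hrank]
  rcases eq_or_eq_of_add_eq_add_of_mul_eq_mul hsum (by rw [← map_mul, ← hc k, pow_succ']) with h | h
  · rw [h, hfix] at hsum
    linear_combination -hsum
  · rw [h, hfix] at hsum
    linear_combination hsum

theorem ncount_trace_eq [CharP F 2] (hrank : Module.finrank F E = 2) {α : F}
    (hα : orderOf α = Fintype.card F - 1) {j : ℕ} {e : Fin (Fintype.card F + 1) → E}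
    (he : Function.Injective e)
    (hc : ∀ k, e k ^ (Fintype.card F + 1) = algebraMap F E (α ^ (2 * j + 1))) {t : F}
    (ht : t ≠ 0) :
    Ncount t (fun k => Algebra.trace F E (e k)) =
      if t ∈ splitTraces (Fintype.card F) α j then 0 else 2 := by
  have hsplit : ∀ t ∈ splitTraces (Fintype.card F) α j,
      Ncount t (fun k => Algebra.trace F E (e k)) = 0 := fun t ht => by
    obtain ⟨y₁, y₂, hne, hprod, rfl⟩ := exists_eq_add_of_mem_splitTraces hα ht
    refine ncount_trace_add_eq_zero hrank hne fun k => ?_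
    rw [hc, hprod, pow_add _ (2 * j) (Fintype.card F), FiniteField.pow_card, pow_succ]
  have hsub : splitTraces (Fintype.card F) α j ⊆ univ.erase 0 := fun t ht =>
    mem_erase.mpr ⟨ne_of_mem_of_not_mem ht (zero_notMem_splitTraces hα j), mem_univ _⟩
  split_ifs with hB
  · exact hsplit t hB
  refine eq_of_le_of_mul_card_sdiff_le_sum hsub (fun t _ => ncount_trace_le_two hrank he hc t)
    hsplit ?_ t (mem_sdiff.mpr ⟨mem_erase.mpr ⟨ht, mem_univ _⟩, hB⟩)
  have heven := FiniteField.even_card_of_char_two (ringChar.eq F 2)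
  have htotal := sum_ncount fun k => Algebra.trace F E (e k)
  rw [← add_sum_erase _ _ (mem_univ 0)] at htotal
  have hzero := ncount_trace_zero_le_one hrank he hc
  rw [card_sdiff_of_subset hsub, card_erase_of_mem (mem_univ _), card_univ, card_splitTraces hα]
  omega

end QuadraticExtension

theorem stmt_11_general (q : ℕ) (F E : Type) [Field F] [Fintype F] [DecidableEq F]
    [Field E] [Fintype E] [Algebra F E]
    (hF : Fintype.card F = q) (hE : Fintype.card E = q ^ 2) (hq : Even q)
    (γ : Eˣ) (hγ : ∀ x : Eˣ, x ∈ Subgroup.zpowers γ)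
    (α : F) (hα : algebraMap F E α = (γ : E) ^ (q + 1))
    (j : ℕ) (b : E) (hb : b ∈ cycClass γ (2 * j + 1) (q - 1)) :
    ∀ i : ℕ, i < q - 1 →
      Ncount (α ^ i) (cwordN γ (q - 1) (q + 1) b) = (rshift (q - 1))^[j] (Wvec q α) i := by
  classical
  intro i hi
  subst hF
  set q := Fintype.card F
  have hq2 : 2 ≤ q := Fintype.one_lt_card
  have : CharP F 2 := ringChar.of_eq (FiniteField.even_card_iff_char_two.mpr (Nat.even_iff.mp hq))
  have hγ' : orderOf (γ : E) = (q - 1) * (q + 1) := by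
    rw [orderOf_units, orderOf_eq_card_of_forall_mem_zpowers hγ, Nat.card_eq_fintype_card,
      Fintype.card_units, hE]
    simpa [mul_comm] using Nat.sq_sub_sq q 1
  have hα' : orderOf α = q - 1 := by
    rw [← orderOf_injective (algebraMap F E : F →* E) (algebraMap F E).injective,
      MonoidHom.coe_coe, hα, orderOf_pow_of_orderOf_eq_mul (hγ'.trans (mul_comm _ _)) (by omega)]
  have hinj := injective_mul_pow_mul (ne_zero_of_mem_cycClass hb) (n := q + 1)
    (orderOf_pow_of_orderOf_eq_mul hγ' (by omega)).ge
  have hnorm (k : Fin (q + 1)) :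
      (b * (γ : E) ^ ((q - 1) * k)) ^ (q + 1) = algebraMap F E (α ^ (2 * j + 1)) :=
    (mul_pow_mul_pow_of_mem_cycClass (hγ' ▸ pow_orderOf_eq_one _) hb k).trans
      (by rw [map_pow, hα])
  have hI : (i + j * (q - 1 - 1)) % (q - 1) ∈ Iset q α ↔ α ^ i ∉ splitTraces q α j := by
    rw [Iset, Set.mem_sdiff, mod_mem_Rset_iff hα' hi]
    exact and_iff_right (Nat.mod_lt _ (by omega))
  rw [rshift_iterate_apply _ _ hi, Wvec]
  refine (ncount_trace_eq (finrank_eq_two_of_card_eq_sq hE) hα' hinj hnorm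
    (pow_ne_zero i (ne_zero_of_orderOf_eq hα' hq2))).trans ?_
  change (if α ^ i ∈ splitTraces q α j then 0 else 2) = _
  by_cases h : α ^ i ∈ splitTraces q α j <;> simp [h, hI]

theorem stmt_11 (q : ℕ) (F E : Type) [Field F] [Fintype F] [DecidableEq F]
    [Field E] [Fintype E] [Algebra F E]
    (hF : Fintype.card F = q) (hE : Fintype.card E = q ^ 2) (hq : Even q)
    (γ : Eˣ) (hγ : ∀ x : Eˣ, x ∈ Subgroup.zpowers γ)
    (α : F) (hα : algebraMap F E α = (γ : E) ^ (q + 1))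
    (j : ℕ) (hj : j < q - 1) (b : E) (hb : b ∈ cycClass γ (2 * j + 1) (q - 1)) :
    ∀ i : ℕ, i < q - 1 →
      Ncount (α ^ i) (cwordN γ (q - 1) (q + 1) b) = (rshift (q - 1))^[j] (Wvec q α) i :=
  stmt_11_general q F E hF hE hq γ hγ α hα j b hb
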